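/- arXiv:1211.6483 — 2 statements merged into one kernel-verified Lean document; each statement's English description precedes it below -/
import Mathlib

section
/- Rules (1)(c) and (2)(c) are inverses: if S is a face sequence satisfying subcondition (c) of rule (1) and S′ is the result of applying rule (1) to S, then S′ is a face sequence satisfying subcondition (c) of rule (2) and applying rule (2) to S′ returns S; conversely, if T is a face sequence satisfying subcondition (c) of rule (2) and T′ is the result of applying rule (2) to T, then T′ satisfies subcondition (c) of rule (1) and applying rule (1) to T′ returns T. -/
set_option linter.unusedVariables false

/-- The alphabet `{0, 1, ∗}` for face sequences. -/
inductive Letter : Type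
  | zero
  | one
  | star
  deriving DecidableEq

/-- A sequence of length `n` over the alphabet `{0, 1, ∗}`. -/
abbrev FSeq (n : ℕ) := Fin n → Letter

/-- `S(1)`, the number of `1`'s in `S`. -/
def count1 {n : ℕ} (S : FSeq n) : ℕ := (Finset.univ.filter fun i => S i = Letter.one).card

/-- `S(0)`, the number of `0`'s in `S`. -/
def count0 {n : ℕ} (S : FSeq n) : ℕ := (Finset.univ.filter fun i => S i = Letter.zero).card

/-- The number of `∗`'s in `S`. -/
def countStar {n : ℕ} (S : FSeq n) : ℕ := (Finset.univ.filter fun i => S i = Letter.star).card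

/-- A face sequence: either no `∗` and exactly `k` ones, or at most `k-1` ones and
(#ones) + (#stars) ≥ `k+1`. -/
def FaceSeq {n : ℕ} (k : ℕ) (S : FSeq n) : Prop :=
  (countStar S = 0 ∧ count1 S = k) ∨ (count1 S + 1 ≤ k ∧ k + 1 ≤ count1 S + countStar S)

/-- `v₀`, the sequence of `k` ones followed by `n - k` zeros. -/
def v0seq (n k : ℕ) : FSeq n := fun i => if (i : ℕ) < k then Letter.one else Letter.zero

/-- `S` contains at least one `∗`. -/
def hasStar {n : ℕ} (S : FSeq n) : Prop := ∃ i, S i = Letter.star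

/-- There is a `1` to the right of the rightmost `∗` (in particular `S` contains a `∗`). -/
def OneRight {n : ℕ} (S : FSeq n) : Prop :=
  hasStar S ∧ ∃ i, S i = Letter.one ∧ ∀ j, i < j → S j ≠ Letter.star

/-- There is no `1` to the right of the rightmost `∗` (and `S` contains a `∗`). -/
def NoOneRight {n : ℕ} (S : FSeq n) : Prop :=
  hasStar S ∧ ∀ i, S i = Letter.one → ∃ j, i < j ∧ S j = Letter.star

/-- There is a `0` to the left of the leftmost `∗` (in particular `S` contains a `∗`). -/
def ZeroLeft {n : ℕ} (S : FSeq n) : Prop :=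
  hasStar S ∧ ∃ i, S i = Letter.zero ∧ ∀ j, j < i → S j ≠ Letter.star

/-- There is no `0` to the left of the leftmost `∗` (and `S` contains a `∗`). -/
def NoZeroLeft {n : ℕ} (S : FSeq n) : Prop :=
  hasStar S ∧ ∀ i, S i = Letter.zero → ∃ j, j < i ∧ S j = Letter.star

/-- `i` is the position of the rightmost `1` of `S`. -/
def IsRightmostOne {n : ℕ} (S : FSeq n) (i : Fin n) : Prop :=
  S i = Letter.one ∧ ∀ j, i < j → S j ≠ Letter.one

/-- `i` is the position of the rightmost `∗` of `S`. -/
def IsRightmostStar {n : ℕ} (S : FSeq n) (i : Fin n) : Prop :=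
  S i = Letter.star ∧ ∀ j, i < j → S j ≠ Letter.star

/-- `i` is the position of the leftmost `0` of `S`. -/
def IsLeftmostZero {n : ℕ} (S : FSeq n) (i : Fin n) : Prop :=
  S i = Letter.zero ∧ ∀ j, j < i → S j ≠ Letter.zero

/-- `i` is the position of the leftmost `∗` of `S`. -/
def IsLeftmostStar {n : ℕ} (S : FSeq n) (i : Fin n) : Prop :=
  S i = Letter.star ∧ ∀ j, j < i → S j ≠ Letter.star

/-- Condition of rule (1), subcondition (a). -/
def Cond1a {n : ℕ} (k m0 m1 : ℕ) (S : FSeq n) : Prop :=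
  count1 S + 1 ≤ k ∧ OneRight S ∧ count1 S ≠ m1

/-- Condition of rule (1), subcondition (b). -/
def Cond1b {n : ℕ} (k m0 m1 : ℕ) (S : FSeq n) : Prop :=
  count1 S + 1 ≤ k ∧ OneRight S ∧ count1 S = m1 ∧ m0 < count0 S

/-- Condition of rule (1), subcondition (c): no `0` to the left of the leftmost `∗`. -/
def Cond1c {n : ℕ} (k m0 m1 : ℕ) (S : FSeq n) : Prop :=
  count1 S + 1 ≤ k ∧ OneRight S ∧ count1 S = m1 ∧ count0 S = m0 ∧ NoZeroLeft S

/-- Condition of rule (2), subcondition (a): here `count1 S + 1 ≠ m1` encodes `S(1) ≠ m₁ - 1`. -/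
def Cond2a {n : ℕ} (k m0 m1 : ℕ) (S : FSeq n) : Prop :=
  count1 S + 2 ≤ k ∧ NoOneRight S ∧ count1 S + 1 ≠ m1

/-- Condition of rule (2), subcondition (b). -/
def Cond2b {n : ℕ} (k m0 m1 : ℕ) (S : FSeq n) : Prop :=
  count1 S + 2 ≤ k ∧ NoOneRight S ∧ count1 S + 1 = m1 ∧ m0 < count0 S

/-- Condition of rule (2), subcondition (c). -/
def Cond2c {n : ℕ} (k m0 m1 : ℕ) (S : FSeq n) : Prop :=
  count1 S + 2 ≤ k ∧ NoOneRight S ∧ count1 S + 1 = m1 ∧ count0 S = m0 ∧ NoZeroLeft S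

/-- `S` is of type 1 (satisfies the condition of rule (1)). -/
def Type1 {n : ℕ} (k m0 m1 : ℕ) (S : FSeq n) : Prop :=
  Cond1a k m0 m1 S ∨ Cond1b k m0 m1 S ∨ Cond1c k m0 m1 S

/-- `S` is of type 2 (satisfies the condition of rule (2)). -/
def Type2 {n : ℕ} (k m0 m1 : ℕ) (S : FSeq n) : Prop :=
  Cond2a k m0 m1 S ∨ Cond2b k m0 m1 S ∨ Cond2c k m0 m1 S

/-- `S` is of type 3: `S(1) = k-1`, `S(0) ≤ n-k-1`, no `1` right of the rightmost `∗`,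
a `0` left of the leftmost `∗`. -/
def Type3 {n : ℕ} (k : ℕ) (S : FSeq n) : Prop :=
  count1 S + 1 = k ∧ count0 S + k + 1 ≤ n ∧ NoOneRight S ∧ ZeroLeft S

/-- `S` is of type 4: `S(1) = k-1`, `S(0) ≤ n-k-2`, no `1` right of the rightmost `∗`,
no `0` left of the leftmost `∗`. -/
def Type4 {n : ℕ} (k : ℕ) (S : FSeq n) : Prop :=
  count1 S + 1 = k ∧ count0 S + k + 2 ≤ n ∧ NoOneRight S ∧ NoZeroLeft S

/-- `S` is of type 5: `S(1) = m₁`, `S(0) ≤ m₀`, a `1` right of the rightmost `∗`,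
a `0` left of the leftmost `∗`. -/
def Type5 {n : ℕ} (m0 m1 : ℕ) (S : FSeq n) : Prop :=
  count1 S = m1 ∧ count0 S ≤ m0 ∧ OneRight S ∧ ZeroLeft S

/-- `S` is of type 6: `S(1) = m₁`, `S(0) < m₀`, a `1` right of the rightmost `∗`,
no `0` left of the leftmost `∗`. -/
def Type6 {n : ℕ} (m0 m1 : ℕ) (S : FSeq n) : Prop :=
  count1 S = m1 ∧ count0 S < m0 ∧ OneRight S ∧ NoZeroLeft S

/-- `S` is of type 7: `S(1) = m₁-1`, `S(0) ≤ m₀`, no `1` right of the rightmost `∗`,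
a `0` left of the leftmost `∗`. -/
def Type7 {n : ℕ} (m0 m1 : ℕ) (S : FSeq n) : Prop :=
  count1 S + 1 = m1 ∧ count0 S ≤ m0 ∧ NoOneRight S ∧ ZeroLeft S

/-- `S` is of type 8: `S(1) = m₁-1`, `S(0) < m₀`, no `1` right of the rightmost `∗`,
no `0` left of the leftmost `∗`. -/
def Type8 {n : ℕ} (m0 m1 : ℕ) (S : FSeq n) : Prop :=
  count1 S + 1 = m1 ∧ count0 S < m0 ∧ NoOneRight S ∧ NoZeroLeft S

/-- `S` is of type 9: `S(1) = k`, `S(0) = n-k`, and `S ≠ v₀`. -/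
def Type9 {n : ℕ} (k : ℕ) (S : FSeq n) : Prop :=
  count1 S = k ∧ count0 S + k = n ∧ S ≠ v0seq n k

/-- `S` is of type 10: `S(1) = k-1`, `S(0) = n-k-1`, no `1` right of the rightmost `∗`,
no `0` left of the leftmost `∗`. -/
def Type10 {n : ℕ} (k : ℕ) (S : FSeq n) : Prop :=
  count1 S + 1 = k ∧ count0 S + k + 1 = n ∧ NoOneRight S ∧ NoZeroLeft S

/-- `S` is of type `i` for `1 ≤ i ≤ 10` (and of no type otherwise). -/
def OfType {n : ℕ} (k m0 m1 : ℕ) (i : ℕ) (S : FSeq n) : Prop :=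
  match i with
  | 1 => Type1 k m0 m1 S
  | 2 => Type2 k m0 m1 S
  | 3 => Type3 k S
  | 4 => Type4 k S
  | 5 => Type5 m0 m1 S
  | 6 => Type6 m0 m1 S
  | 7 => Type7 m0 m1 S
  | 8 => Type8 m0 m1 S
  | 9 => Type9 k S
  | 10 => Type10 k S
  | _ => False

/-- The replacement of rule (1): replace the rightmost `1` with `∗`. -/
def Apply1 {n : ℕ} (S S' : FSeq n) : Prop :=
  ∃ i, IsRightmostOne S i ∧ S' = Function.update S i Letter.star

/-- The replacement of rule (2): replace the rightmost `∗` with `1`. -/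
def Apply2 {n : ℕ} (S S' : FSeq n) : Prop :=
  ∃ i, IsRightmostStar S i ∧ S' = Function.update S i Letter.one

/-- The replacement of rules (3), (5) and (7): replace the leftmost `0` with `∗`. -/
def Apply3 {n : ℕ} (S S' : FSeq n) : Prop :=
  ∃ i, IsLeftmostZero S i ∧ S' = Function.update S i Letter.star

/-- The replacement of rules (4), (6) and (8): replace the leftmost `∗` with `0`. -/
def Apply4 {n : ℕ} (S S' : FSeq n) : Prop :=
  ∃ i, IsLeftmostStar S i ∧ S' = Function.update S i Letter.zero

/-- The replacement of rule (9): replace the leftmost `0` and the rightmost `1` each with `∗`. -/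
def Apply9 {n : ℕ} (S S' : FSeq n) : Prop :=
  ∃ i j, IsLeftmostZero S i ∧ IsRightmostOne S j ∧
    S' = Function.update (Function.update S i Letter.star) j Letter.star

/-- The replacement of rule (10): replace the leftmost `∗` with `0` and the other `∗` with `1`. -/
def Apply10 {n : ℕ} (S S' : FSeq n) : Prop :=
  ∃ i j, IsLeftmostStar S i ∧ IsRightmostStar S j ∧ i ≠ j ∧
    S' = Function.update (Function.update S i Letter.zero) j Letter.one

/-- The matching `V` on face sequences: a face sequence `S` of type 1, 3, 5, 7 or 9 is
matched with the result `S'` of applying the corresponding rule to it. -/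
def Vmatch {n : ℕ} (k m0 m1 : ℕ) (S S' : FSeq n) : Prop :=
  FaceSeq k S ∧
    ((Type1 k m0 m1 S ∧ Apply1 S S') ∨
     (Type3 k S ∧ Apply3 S S') ∨
     (Type5 m0 m1 S ∧ Apply3 S S') ∨
     (Type7 m0 m1 S ∧ Apply3 S S') ∨
     (Type9 k S ∧ Apply9 S S'))

/-- The vertex set of a face sequence `S`: the vertex sequences (0/1-sequences with
exactly `k` ones) agreeing with `S` wherever `S` is not `∗`. -/
def VertexSet {n : ℕ} (k : ℕ) (S : FSeq n) : Set (FSeq n) :=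
  {v | (∀ i, v i ≠ Letter.star) ∧ count1 v = k ∧ ∀ i, S i ≠ Letter.star → v i = S i}

/-- The dimension of the face `F(S)`. -/
def fdim {n : ℕ} (S : FSeq n) : ℕ :=
  if countStar S = 0 then 0 else countStar S - 1

/-- `T` is a codimension-1 face of `S`. -/
def Codim1 {n : ℕ} (k : ℕ) (T S : FSeq n) : Prop :=
  VertexSet k T ⊂ VertexSet k S ∧ fdim T + 1 = fdim S

/-- A (nontrivial) `V`-path `a₀, b₀, a₁, b₁, …, b_r, a_{r+1}` of face sequences. -/
structure VPath (n k m0 m1 r : ℕ) where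
  a : Fin (r + 2) → FSeq n
  b : Fin (r + 1) → FSeq n
  face_a : ∀ i, FaceSeq k (a i)
  face_b : ∀ i, FaceSeq k (b i)
  mem : ∀ i : Fin (r + 1), Vmatch k m0 m1 (a i.castSucc) (b i)
  codim_left : ∀ i : Fin (r + 1), Codim1 k (a i.castSucc) (b i)
  codim_right : ∀ i : Fin (r + 1), Codim1 k (a i.succ) (b i)
  step_ne : ∀ i : Fin (r + 1), a i.castSucc ≠ a i.succ

/-!
Both rules swap a single `1` and `∗`, so each undoes the other once the changed position is the
rightmost `∗` (resp. `1`) of the result: under (1) the `1` lies right of every `∗`, under (2) the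
`∗` lies right of every `1`. The swap trades one unit between `S(1)` and the number of `∗`'s and
fixes `S(0)`, which matches the counts in the two (c) conditions. The leftmost `∗` survives because
in both directions another `∗` lies left of the changed position; under (2) it exists since the
face-sequence inequality `k + 1 ≤ S(1) + #∗` together with `S(1) ≤ k - 2` forces two `∗`'s.
-/

open Finset Function

theorem card_filter_update_add_ite {α β : Type*} [Fintype α] [DecidableEq α] (f : α → β) (i : α)
    (b : β) (p : β → Prop) [DecidablePred p] :
    #{j | p (update f i b j)} + (if p (f i) then 1 else 0) =
      #{j | p (f j)} + (if p b then 1 else 0) := by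
  have hrest : ∑ j ∈ univ.erase i, (if p (update f i b j) then 1 else 0) =
      ∑ j ∈ univ.erase i, (if p (f j) then 1 else 0) :=
    sum_congr rfl fun j hj => by rw [update_of_ne (ne_of_mem_erase hj)]
  rw [card_filter, card_filter, ← add_sum_erase _ _ (mem_univ i),
    ← add_sum_erase univ (fun j => if p (f j) then 1 else 0) (mem_univ i), hrest, update_self]
  ring

section Swap

variable {n : ℕ} {S : FSeq n} {i : Fin n}

theorem count1_update_star_add_one (hi : S i = .one) :
    count1 (update S i .star) + 1 = count1 S := by
  simpa [hi, count1] using card_filter_update_add_ite S i .star (· = Letter.one)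

theorem count0_update_star (hi : S i = .one) : count0 (update S i .star) = count0 S := by
  simpa [hi, count0] using card_filter_update_add_ite S i .star (· = Letter.zero)

theorem countStar_update_star (hi : S i = .one) :
    countStar (update S i .star) = countStar S + 1 := by
  simpa [hi, countStar] using card_filter_update_add_ite S i .star (· = Letter.star)

end Swap

theorem countStar_pos {n : ℕ} {S : FSeq n} (h : hasStar S) : 0 < countStar S := by
  obtain ⟨i, hi⟩ := h
  exact card_pos.mpr ⟨i, by simp [hi]⟩

theorem FaceSeq.of_hasStar {n k : ℕ} {S : FSeq n} (hF : FaceSeq k S) (h : hasStar S) :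
    count1 S + 1 ≤ k ∧ k + 1 ≤ count1 S + countStar S := by
  rcases hF with ⟨h0, -⟩ | hF
  · exact absurd h0 (countStar_pos h).ne'
  · exact hF

theorem OneRight.star_lt {n : ℕ} {S : FSeq n} {i j : Fin n} (hS : OneRight S)
    (hi : IsRightmostOne S i) (hj : S j = .star) : j < i := by
  obtain ⟨-, l, hl, hnostar⟩ := hS
  have hli : l ≤ i := le_of_not_gt fun h => hi.2 l h hl
  have hjl : j ≤ l := le_of_not_gt fun h => hnostar j h hj
  exact lt_of_lt_of_le (lt_of_le_of_ne hjl (by rintro rfl; simp [hl] at hj)) hli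

theorem NoOneRight.one_lt {n : ℕ} {S : FSeq n} {i l : Fin n} (hS : NoOneRight S)
    (hi : IsRightmostStar S i) (hl : S l = .one) : l < i := by
  obtain ⟨m, hlm, hm⟩ := hS.2 l hl
  exact lt_of_lt_of_le hlm (le_of_not_gt fun h => hi.2 m h hm)

theorem IsRightmostStar.exists_star_lt {n : ℕ} {S : FSeq n} {i : Fin n}
    (hi : IsRightmostStar S i) (h : 1 < countStar S) : ∃ j, S j = .star ∧ j < i := by
  obtain ⟨j, hj, hji⟩ := exists_mem_ne h i
  replace hj : S j = .star := (mem_filter.mp hj).2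
  exact ⟨j, hj, lt_of_le_of_ne (le_of_not_gt fun h => hi.2 j h hj) hji⟩

theorem update_ne_of_lt {n : ℕ} {S : FSeq n} {i : Fin n} {b : Letter}
    (h : ∀ j, S j = b → j < i) (j : Fin n) (hij : i < j) : update S i b j ≠ b := by
  rw [update_of_ne hij.ne']
  exact fun hj => (h j hj).not_gt hij

theorem noOneRight_update_star {n : ℕ} {S : FSeq n} {i : Fin n} (hi : IsRightmostOne S i) :
    NoOneRight (update S i .star) := by
  refine ⟨⟨i, update_self ..⟩, fun l hl => ⟨i, ?_, update_self ..⟩⟩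
  have hli : l ≠ i := by rintro rfl; simp at hl
  rw [update_of_ne hli] at hl
  exact lt_of_le_of_ne (le_of_not_gt fun h => hi.2 l h hl) hli

theorem oneRight_update_one {n : ℕ} {S : FSeq n} {i j : Fin n} (hi : IsRightmostStar S i)
    (hj : S j = .star) (hji : j ≠ i) : OneRight (update S i .one) :=
  ⟨⟨j, by rwa [update_of_ne hji]⟩, i, update_self .., fun l hl => by
    rw [update_of_ne hl.ne']
    exact hi.2 l hl⟩

theorem NoZeroLeft.update {n : ℕ} {S : FSeq n} {i j : Fin n} {b : Letter} (hS : NoZeroLeft S)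
    (hj : S j = .star) (hji : j < i) (hb : b ≠ .zero) : NoZeroLeft (update S i b) := by
  refine ⟨⟨j, by rwa [update_of_ne hji.ne]⟩, fun l hl => ?_⟩
  have hli : l ≠ i := by rintro rfl; simp [hb] at hl
  rw [update_of_ne hli] at hl
  obtain ⟨m, hml, hm⟩ := hS.2 l hl
  by_cases hmi : m = i
  · subst hmi
    exact ⟨j, hji.trans hml, by rwa [update_of_ne hji.ne]⟩
  · exact ⟨m, hml, by rwa [update_of_ne hmi]⟩

theorem rule1c_rule2c_inverse_general (n k m0 m1 : ℕ) :
    (∀ S S' : FSeq n, FaceSeq k S → Cond1c k m0 m1 S → Apply1 S S' →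
      FaceSeq k S' ∧ Cond2c k m0 m1 S' ∧ Apply2 S' S) ∧
    (∀ T T' : FSeq n, FaceSeq k T → Cond2c k m0 m1 T → Apply2 T T' →
      FaceSeq k T' ∧ Cond1c k m0 m1 T' ∧ Apply1 T' T) := by
  constructor
  · rintro S _ hF ⟨-, hOR, rfl, rfl, hNZL⟩ ⟨i, hi, rfl⟩
    have hstar_lt : ∀ j, S j = .star → j < i := fun j hj => hOR.star_lt hi hj
    obtain ⟨j, hj⟩ := hOR.1
    have h1 := count1_update_star_add_one hi.1
    have hs := countStar_update_star hi.1
    have hF' := hF.of_hasStar hOR.1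
    refine ⟨.inr ⟨by omega, by omega⟩,
      ⟨by omega, noOneRight_update_star hi, by omega, count0_update_star hi.1,
        hNZL.update hj (hstar_lt j hj) (by decide)⟩,
      i, ⟨update_self .., update_ne_of_lt hstar_lt⟩, by simp [← hi.1]⟩
  · rintro T _ hF ⟨hk, hNOR, rfl, rfl, hNZL⟩ ⟨i, hi, rfl⟩
    set T' := update T i .one
    have hT : update T' i .star = T := by simp [T', ← hi.1]
    have hT'i : T' i = .one := update_self ..
    have h1 := count1_update_star_add_one hT'i
    have hs := countStar_update_star hT'i
    rw [hT] at h1 hs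
    have hF' := hF.of_hasStar hNOR.1
    obtain ⟨j, hj, hjlt⟩ := IsRightmostStar.exists_star_lt hi (by omega)
    refine ⟨.inr ⟨by omega, by omega⟩,
      ⟨by omega, oneRight_update_one hi hj hjlt.ne, by omega, by rw [← count0_update_star hT'i, hT],
        hNZL.update hj hjlt (by decide)⟩,
      i, ⟨hT'i, update_ne_of_lt fun l hl => hNOR.one_lt hi hl⟩, hT.symm⟩

/-- **Rules (1)(c) and (2)(c) are inverses of each other.** -/
theorem rule1c_rule2c_inverse (n k m0 m1 : ℕ) (hk1 : 1 ≤ k) (hk2 : k ≤ n - 1)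
    (hm0 : m0 + k + 1 ≤ n) (hm1l : 1 ≤ m1) (hm1u : m1 + 1 ≤ k) :
    (∀ S S' : FSeq n, FaceSeq k S → Cond1c k m0 m1 S → Apply1 S S' →
      FaceSeq k S' ∧ Cond2c k m0 m1 S' ∧ Apply2 S' S) ∧
    (∀ T T' : FSeq n, FaceSeq k T → Cond2c k m0 m1 T → Apply2 T T' →
      FaceSeq k T' ∧ Cond1c k m0 m1 T' ∧ Apply1 T' T) :=
  rule1c_rule2c_inverse_general n k m0 m1
end

section
/- Rules (5) and (6) are inverses: if S is a face sequence of type 5 and S′ is the result of applying rule (5) to S, then S′ is a face sequence of type 6 and applying rule (6) to S′ returns S; conversely, if T is a face sequence of type 6 and T′ is the result of applying rule (6) to T, then T′ is of type 5 and applying rule (5) to T′ returns T. -/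
set_option linter.unusedVariables false

/-!
Under rule (5) the leftmost `0` precedes every `∗`, so turning it into a `∗` makes it the
leftmost `∗`, leaves no `0` before it, and does not disturb the rightmost `∗` or the `1` after
it; turning that `∗` back into `0` is rule (6). Conversely, under rule (6) every `0` follows the
leftmost `∗`, so rule (5) undoes rule (6). Only the counts need care: `S(0)` drops or rises by
one, and in the converse direction `S(0) < m₀ ≤ n - k - 1` leaves at least `k + 2` ones and
stars, enough for a face sequence with one `∗` fewer.
-/

open Function

section Counting

lemma card_filter_update_add {α β : Type*} [Fintype α] [DecidableEq α] [DecidableEq β]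
    (f : α → β) (i : α) (b L : β) :
    (Finset.univ.filter fun j => update f i b j = L).card + (if f i = L then 1 else 0)
      = (Finset.univ.filter fun j => f j = L).card + (if b = L then 1 else 0) := by
  have hindicator : (fun j => if update f i b j = L then (1 : ℕ) else 0)
      = update (fun j => if f j = L then (1 : ℕ) else 0) i (if b = L then 1 else 0) := by
    funext j
    by_cases hj : j = i
    · subst hj; simp
    · simp [update_of_ne hj]
  rw [Finset.card_filter, Finset.card_filter, hindicator,
    Finset.sum_update_of_mem (Finset.mem_univ i),
    ← Finset.sum_erase_add Finset.univ _ (Finset.mem_univ i), Finset.sdiff_singleton_eq_erase]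
  ring

variable {n : ℕ}

lemma count0_update (S : FSeq n) (i : Fin n) (b : Letter) :
    count0 (update S i b) + (if S i = Letter.zero then 1 else 0)
      = count0 S + (if b = Letter.zero then 1 else 0) :=
  card_filter_update_add S i b Letter.zero

lemma count1_update (S : FSeq n) (i : Fin n) (b : Letter) :
    count1 (update S i b) + (if S i = Letter.one then 1 else 0)
      = count1 S + (if b = Letter.one then 1 else 0) :=
  card_filter_update_add S i b Letter.one

lemma countStar_update (S : FSeq n) (i : Fin n) (b : Letter) :
    countStar (update S i b) + (if S i = Letter.star then 1 else 0)
      = countStar S + (if b = Letter.star then 1 else 0) :=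
  card_filter_update_add S i b Letter.star

lemma count0_add_count1_add_countStar (S : FSeq n) :
    count0 S + count1 S + countStar S = n := by
  unfold count0 count1 countStar
  rw [Finset.card_filter, Finset.card_filter, Finset.card_filter,
    ← Finset.sum_add_distrib, ← Finset.sum_add_distrib]
  have hone : ∀ j ∈ (Finset.univ : Finset (Fin n)), ((if S j = Letter.zero then (1 : ℕ) else 0)
      + (if S j = Letter.one then 1 else 0)) + (if S j = Letter.star then 1 else 0) = 1 := by
    intro j _
    cases S j <;> simp
  simp [Finset.sum_congr rfl hone]

lemma countStar_pos_iff {S : FSeq n} : 0 < countStar S ↔ hasStar S := by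
  simp [countStar, hasStar, Finset.card_pos, Finset.filter_nonempty_iff]

lemma faceSeq_iff_of_hasStar {k : ℕ} {S : FSeq n} (hS : hasStar S) :
    FaceSeq k S ↔ count1 S + 1 ≤ k ∧ k + 1 ≤ count1 S + countStar S := by
  have := countStar_pos_iff.mpr hS
  unfold FaceSeq
  constructor
  · rintro (⟨h, -⟩ | h)
    · omega
    · exact h
  · exact Or.inr

end Counting

section Positions

variable {n : ℕ} {S : FSeq n} {i : Fin n}

lemma IsLeftmostZero.lt_of_eq_star (hZ : ZeroLeft S) (hi : IsLeftmostZero S i) {s : Fin n}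
    (hs : S s = Letter.star) : i < s := by
  obtain ⟨-, z, hz, hzl⟩ := hZ
  have hiz : i ≤ z := not_lt.mp fun h => hi.2 z h hz
  by_contra! hsi
  exact hzl s (lt_of_le_of_ne (hsi.trans hiz) (by rintro rfl; simp_all)) hs

lemma IsLeftmostStar.lt_of_eq_zero (hN : NoZeroLeft S) (hi : IsLeftmostStar S i) {z : Fin n}
    (hz : S z = Letter.zero) : i < z := by
  obtain ⟨j, hjz, hj⟩ := hN.2 z hz
  exact lt_of_le_of_lt (not_lt.mp fun h => hi.2 j h hj) hjz

lemma isLeftmostStar_update_star (h : ∀ j < i, S j ≠ Letter.star) :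
    IsLeftmostStar (update S i Letter.star) i :=
  ⟨by simp, fun j hj => by rw [update_of_ne hj.ne]; exact h j hj⟩

lemma isLeftmostZero_update_zero (h : ∀ j < i, S j ≠ Letter.zero) :
    IsLeftmostZero (update S i Letter.zero) i :=
  ⟨by simp, fun j hj => by rw [update_of_ne hj.ne]; exact h j hj⟩

lemma noZeroLeft_update_star (hi : IsLeftmostZero S i) : NoZeroLeft (update S i Letter.star) := by
  refine ⟨⟨i, by simp⟩, fun j hj => ⟨i, ?_, by simp⟩⟩
  have hji : j ≠ i := by rintro rfl; simp at hj
  rw [update_of_ne hji] at hj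
  exact lt_of_le_of_ne (not_lt.mp fun h => hi.2 j h hj) hji.symm

lemma zeroLeft_update_zero (hS : hasStar (update S i Letter.zero))
    (h : ∀ j < i, S j ≠ Letter.star) : ZeroLeft (update S i Letter.zero) :=
  ⟨hS, i, by simp, fun j hj => by rw [update_of_ne hj.ne]; exact h j hj⟩

lemma OneRight.update_star (h : OneRight S) (hi : ∀ s, S s = Letter.star → i < s) :
    OneRight (update S i Letter.star) := by
  obtain ⟨⟨s, hs⟩, p, hp, hpr⟩ := h
  have hip : i < p := lt_of_lt_of_le (hi s hs) (not_lt.mp fun h => hpr s h hs)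
  refine ⟨⟨i, by simp⟩, p, by rwa [update_of_ne hip.ne'], fun q hq => ?_⟩
  rw [update_of_ne (hip.trans hq).ne']
  exact hpr q hq

lemma OneRight.update_of_ne (h : OneRight S) (hi : S i ≠ Letter.one) {b : Letter}
    (hb : b ≠ Letter.star) (hS : hasStar (update S i b)) : OneRight (update S i b) := by
  obtain ⟨-, p, hp, hpr⟩ := h
  have hpi : p ≠ i := by rintro rfl; exact hi hp
  refine ⟨hS, p, by rwa [Function.update_of_ne hpi], fun q hq => ?_⟩
  by_cases hqi : q = i
  · subst hqi; simpa using hb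
  · rw [Function.update_of_ne hqi]; exact hpr q hq

end Positions

section Rules

variable {n k m0 m1 : ℕ} {S : FSeq n} {i : Fin n}

lemma rule5_forward (hF : FaceSeq k S) (h5 : Type5 m0 m1 S) (hi : IsLeftmostZero S i) :
    FaceSeq k (update S i Letter.star) ∧ Type6 m0 m1 (update S i Letter.star) ∧
      Apply4 (update S i Letter.star) S := by
  obtain ⟨h1, h0, hOR, hZL⟩ := h5
  have hbefore : ∀ s, S s = Letter.star → i < s := fun s hs => hi.lt_of_eq_star hZL hs
  have hS' : hasStar (update S i Letter.star) := ⟨i, by simp⟩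
  have hc0 := count0_update S i Letter.star
  have hc1 := count1_update S i Letter.star
  have hcs := countStar_update S i Letter.star
  simp only [hi.1, reduceCtorEq, if_true, if_false] at hc0 hc1 hcs
  have hface := (faceSeq_iff_of_hasStar hOR.1).mp hF
  refine ⟨(faceSeq_iff_of_hasStar hS').mpr (by omega),
    ⟨by omega, by omega, hOR.update_star hbefore, noZeroLeft_update_star hi⟩,
    i, isLeftmostStar_update_star fun j hj hs => (hj.trans (hbefore j hs)).false, ?_⟩
  rw [update_idem, ← hi.1, update_eq_self]

lemma rule6_forward (hn : m0 + k + 1 ≤ n) (hF : FaceSeq k S) (h6 : Type6 m0 m1 S)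
    (hi : IsLeftmostStar S i) :
    FaceSeq k (update S i Letter.zero) ∧ Type5 m0 m1 (update S i Letter.zero) ∧
      Apply3 (update S i Letter.zero) S := by
  obtain ⟨h1, h0, hOR, hNZL⟩ := h6
  have hc0 := count0_update S i Letter.zero
  have hc1 := count1_update S i Letter.zero
  have hcs := countStar_update S i Letter.zero
  simp only [hi.1, reduceCtorEq, if_true, if_false] at hc0 hc1 hcs
  have htot := count0_add_count1_add_countStar S
  have hface := (faceSeq_iff_of_hasStar hOR.1).mp hF
  have hS' : hasStar (update S i Letter.zero) := countStar_pos_iff.mp (by omega)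
  refine ⟨(faceSeq_iff_of_hasStar hS').mpr (by omega),
    ⟨by omega, by omega, hOR.update_of_ne (by simp [hi.1]) (by simp) hS',
      zeroLeft_update_zero hS' hi.2⟩,
    i, isLeftmostZero_update_zero fun j hj hz => (hj.trans (hi.lt_of_eq_zero hNZL hz)).false, ?_⟩
  rw [update_idem, ← hi.1, update_eq_self]

end Rules

theorem rule5_rule6_inverse_general (n k m0 m1 : ℕ)
    (hm0 : m0 + k + 1 ≤ n) :
    (∀ S S' : FSeq n, FaceSeq k S → Type5 m0 m1 S → Apply3 S S' →
      FaceSeq k S' ∧ Type6 m0 m1 S' ∧ Apply4 S' S) ∧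
    (∀ T T' : FSeq n, FaceSeq k T → Type6 m0 m1 T → Apply4 T T' →
      FaceSeq k T' ∧ Type5 m0 m1 T' ∧ Apply3 T' T) := by
  constructor
  · rintro S _ hF h5 ⟨i, hi, rfl⟩
    exact rule5_forward hF h5 hi
  · rintro T _ hF h6 ⟨i, hi, rfl⟩
    exact rule6_forward hm0 hF h6 hi

/-- **Rules (5) and (6) are inverses of each other.** -/
theorem rule5_rule6_inverse (n k m0 m1 : ℕ) (hk1 : 1 ≤ k) (hk2 : k ≤ n - 1)
    (hm0 : m0 + k + 1 ≤ n) (hm1l : 1 ≤ m1) (hm1u : m1 + 1 ≤ k) :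
    (∀ S S' : FSeq n, FaceSeq k S → Type5 m0 m1 S → Apply3 S S' →
      FaceSeq k S' ∧ Type6 m0 m1 S' ∧ Apply4 S' S) ∧
    (∀ T T' : FSeq n, FaceSeq k T → Type6 m0 m1 T → Apply4 T T' →
      FaceSeq k T' ∧ Type5 m0 m1 T' ∧ Apply3 T' T) :=
  rule5_rule6_inverse_general n k m0 m1 hm0
end
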